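/- Let k ≥ 2 and let A be a symmetric n×n matrix with eigenvalues in Γ_k^+. If σ_k(A) ≥ c_1 > 0 and σ_{k−1}(A) ≤ c_2, then all eigenvalues of A are bounded in absolute value by a constant C depending only on c_1, c_2 (and n, k). -/

import Mathlib

open Matrix Finset

/-- The `k`-th elementary symmetric polynomial of `x : Fin n → ℝ`. -/
noncomputable def esym (n k : ℕ) (x : Fin n → ℝ) : ℝ :=
  ∑ s ∈ Finset.powersetCard k (Finset.univ : Finset (Fin n)), ∏ i ∈ s, x i

/-- `σ_k(A)`: the `k`-th elementary symmetric polynomial of the eigenvalues of a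
symmetric (Hermitian) real matrix `A` (junk value `0` otherwise). -/
noncomputable def msigma {n : ℕ} (k : ℕ) (A : Matrix (Fin n) (Fin n) ℝ) : ℝ :=
  if h : A.IsHermitian then esym n k h.eigenvalues else 0

/-- The `q`-th Newton transformation `T_q(A) = ∑_{i=0}^q (-1)^i σ_{q-i}(A) A^i`. -/
noncomputable def newton {n : ℕ} (q : ℕ) (A : Matrix (Fin n) (Fin n) ℝ) :
    Matrix (Fin n) (Fin n) ℝ :=
  ∑ i ∈ Finset.range (q + 1), ((-1 : ℝ) ^ i * msigma (q - i) A) • A ^ i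

/-- `Γ_k^+ ⊆ ℝ^n`: the connected component of `{σ_k > 0}` containing the positive cone
(equivalently, containing the point `(1,…,1)`). -/
def Gamma (n k : ℕ) : Set (Fin n → ℝ) :=
  connectedComponentIn {x : Fin n → ℝ | 0 < esym n k x} (fun _ => 1)

/-- A symmetric matrix lies in `Γ_k^+` if its eigenvalue vector does. -/
def inGamma (n k : ℕ) (A : Matrix (Fin n) (Fin n) ℝ) : Prop :=
  ∃ h : A.IsHermitian, h.eigenvalues ∈ Gamma n k


open Polynomial in
lemma step_multiset (n : ℕ) (M : Multiset ℝ) (hM : Multiset.card M = n + 1) :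
    ∃ N : Multiset ℝ, Multiset.card N = n ∧
      ∀ j, j ≤ n → ((n + 1 : ℕ) : ℝ) * N.esymm j = ((n + 1 - j : ℕ) : ℝ) * M.esymm j := by
  set P : ℝ[X] := (M.map fun r => X - C r).prod with hP
  have hdeg : P.natDegree = n + 1 := by
    rw [hP, natDegree_multiset_prod_X_sub_C_eq_card, hM]
  have hmonic : P.Monic :=
    monic_multiset_prod_of_monic _ _ (fun r _ => monic_X_sub_C _)
  have hroots : P.roots = M := roots_multiset_prod_X_sub_C M
  set Q : ℝ[X] := derivative P with hQ
  have hQtop : Q.coeff n = (n + 1 : ℝ) := by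
    rw [hQ, coeff_derivative]
    have : P.coeff (n + 1) = 1 := by
      rw [← hdeg]; exact hmonic.coeff_natDegree
    rw [this, one_mul]
  have hQdeg : Q.natDegree = n := by
    refine le_antisymm ?_ (le_natDegree_of_ne_zero (by rw [hQtop]; positivity))
    have h5 := natDegree_derivative_le P
    rw [← hQ] at h5
    omega
  have hQcard : Multiset.card Q.roots = n := by
    refine le_antisymm (hQdeg ▸ Q.card_roots') ?_
    have h1 := P.card_roots_le_derivative
    rw [← hQ, hroots, hM] at h1
    omega
  have hQlead : Q.leadingCoeff = (n + 1 : ℝ) := by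
    rw [leadingCoeff, hQdeg, hQtop]
  refine ⟨Q.roots, hQcard, fun j hj => ?_⟩
  have h1 : Q.coeff (n - j) = (n + 1 : ℝ) * ((-1) ^ j * Q.roots.esymm j) := by
    have := Polynomial.coeff_eq_esymm_roots_of_card
      (hQcard.trans hQdeg.symm) (k := n - j) (by omega)
    rw [this, hQlead, hQdeg]
    have hnnj : n - (n - j) = j := by omega
    rw [hnnj, mul_assoc]
  have h2 : Q.coeff (n - j) = ((n + 1 - j : ℕ) : ℝ) * ((-1) ^ j * M.esymm j) := by
    rw [hQ, coeff_derivative]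
    have hP1 : P.coeff (n - j + 1) = (-1) ^ j * M.esymm j := by
      have hle : n - j + 1 ≤ Multiset.card M := by omega
      have h6 := Multiset.prod_X_sub_C_coeff M hle
      rw [← hP] at h6
      rw [h6, hM]
      have h7 : n + 1 - (n - j + 1) = j := by omega
      rw [h7]
    rw [hP1]
    have h8 : ((n + 1 - j : ℕ) : ℝ) = ((n - j : ℕ) : ℝ) + 1 := by
      have : n + 1 - j = (n - j) + 1 := by omega
      rw [this]; push_cast; ring
    rw [h8]; ring
  have h3 := h1.symm.trans h2
  have hpow : ((-1 : ℝ) ^ j) ≠ 0 := by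
    intro h; simpa using congrArg abs h
  have h4 : ((-1:ℝ)^j) * (((n:ℝ)+1) * Q.roots.esymm j)
      = ((-1:ℝ)^j) * (((n+1-j : ℕ):ℝ) * M.esymm j) := by linear_combination h3
  have hc : ((n+1:ℕ):ℝ) = (n:ℝ)+1 := by push_cast; ring
  rw [hc]
  exact mul_left_cancel₀ hpow h4


lemma esym_eq_esymm (n j : ℕ) (x : Fin n → ℝ) :
    esym n j x = (Finset.univ.val.map x).esymm j :=
  (Finset.esymm_map_val x univ j).symm

lemma exists_fn (m : ℕ) (s : Multiset ℝ) (h : Multiset.card s = m) :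
    ∃ y : Fin m → ℝ, Finset.univ.val.map y = s := by
  obtain ⟨l, rfl⟩ : ∃ l : List ℝ, (l : Multiset ℝ) = s := ⟨s.toList, s.coe_toList⟩
  simp only [Multiset.coe_card] at h
  subst h
  exact ⟨l.get, by rw [Fin.univ_val_map]; exact congrArg _ (List.ofFn_get l)⟩

lemma esym_zero (n : ℕ) (x : Fin n → ℝ) : esym n 0 x = 1 := by
  simp [esym]

lemma card_univ_fin (n : ℕ) : (Finset.univ : Finset (Fin n)).card = n := by simp

lemma esym_top (n : ℕ) (x : Fin n → ℝ) : esym n n x = ∏ i, x i := by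
  have h : Finset.powersetCard n (Finset.univ : Finset (Fin n)) = {Finset.univ} := by
    refine Finset.eq_singleton_iff_unique_mem.mpr ⟨?_, ?_⟩
    · exact Finset.mem_powersetCard.mpr ⟨Finset.subset_univ _, by simp⟩
    · intro s hs
      obtain ⟨_, hcard⟩ := Finset.mem_powersetCard.mp hs
      exact Finset.eq_univ_of_card s (by simpa using hcard)
  rw [esym, h, Finset.sum_singleton]

lemma esym_one (n : ℕ) (x : Fin n → ℝ) : esym n 1 x = ∑ i, x i := by
  rw [esym, Finset.powersetCard_one, Finset.sum_map]
  simp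

lemma prod_add_esym (n : ℕ) (x : Fin n → ℝ) (t : ℝ) :
    ∏ i, (x i + t) = ∑ j ∈ Finset.range (n + 1), esym n j x * t ^ (n - j) := by
  rw [Finset.prod_add]
  rw [Finset.powerset_card_disjiUnion]
  erw [Finset.sum_disjiUnion]
  rw [card_univ_fin n]
  refine Finset.sum_congr rfl fun j hj => ?_
  rw [esym, Finset.sum_mul]
  refine Finset.sum_congr rfl fun s hs => ?_
  have hcard : s.card = j := (Finset.mem_powersetCard.mp hs).2
  rw [Finset.prod_const]
  congr 1
  rw [Finset.card_sdiff_of_subset (Finset.subset_univ s), card_univ_fin n, hcard]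

lemma pos_of_esym_pos {m : ℕ} {y : Fin m → ℝ}
    (h0 : ∀ j, 1 ≤ j → j ≤ m → 0 ≤ esym m j y) (hm : 0 < esym m m y) :
    ∀ i, 0 < y i := by
  intro i
  rcases lt_trichotomy (y i) 0 with hneg | hzero | hpos
  · exfalso
    set t : ℝ := -y i with ht
    have htpos : 0 < t := by simp [ht]; linarith
    have hQ0 : ∏ l, (y l + t) = 0 :=
      Finset.prod_eq_zero (Finset.mem_univ i) (by simp [ht])
    have hQpos : 0 < ∏ l, (y l + t) := by
      rw [prod_add_esym]
      rw [Finset.sum_range_succ']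
      have h1 : 0 < esym m 0 y * t ^ (m - 0) := by
        rw [esym_zero]; simpa using pow_pos htpos m
      have h2 : ∀ j ∈ Finset.range m, 0 ≤ esym m (j + 1) y * t ^ (m - (j + 1)) := by
        intro j hj
        have := h0 (j + 1) (by omega) (by simpa using Finset.mem_range.mp hj)
        positivity
      have := Finset.sum_nonneg h2
      linarith
    rw [hQ0] at hQpos; exact lt_irrefl 0 hQpos
  · exfalso
    rw [esym_top] at hm
    have : ∏ l, y l = 0 := Finset.prod_eq_zero (Finset.mem_univ i) hzero
    rw [this] at hm; exact lt_irrefl 0 hm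
  · exact hpos

lemma esym_pos {m j : ℕ} (hj : j ≤ m) {y : Fin m → ℝ} (hy : ∀ i, 0 < y i) :
    0 < esym m j y := by
  rw [esym]
  refine Finset.sum_pos (fun s _ => Finset.prod_pos fun i _ => hy i) ?_
  exact Finset.powersetCard_nonempty.mpr (by rw [card_univ_fin]; exact hj)

lemma sq_sum_aux {ι : Type*} [DecidableEq ι] (s : Finset ι) (f : ι → ℝ) :
    (∑ i ∈ s, f i) ^ 2 = ∑ i ∈ s, f i ^ 2 + 2 * ∑ t ∈ s.powersetCard 2, ∏ i ∈ t, f i := by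
  induction s using Finset.cons_induction with
  | empty =>
    have h : Finset.powersetCard 2 (∅ : Finset ι) = ∅ :=
      Finset.powersetCard_eq_empty.mpr (by simp)
    simp [h]
  | cons a s ha ih =>
    rw [Finset.sum_cons, Finset.sum_cons]
    have hps : (Finset.cons a s ha).powersetCard 2 =
        s.powersetCard 2 ∪ (s.powersetCard 1).image (insert a) := by
      rw [Finset.cons_eq_insert]
      exact Finset.powersetCard_succ_insert ha 1
    have hdisj : Disjoint (s.powersetCard 2) ((s.powersetCard 1).image (insert a)) := by
      rw [Finset.disjoint_left]
      intro t ht ht'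
      obtain ⟨u, hu, rfl⟩ := Finset.mem_image.mp ht'
      have : a ∈ insert a u := Finset.mem_insert_self a u
      have hsub := (Finset.mem_powersetCard.mp ht).1
      exact ha (hsub this)
    have hinj : ∀ u ∈ s.powersetCard 1, ∀ v ∈ s.powersetCard 1,
        insert a u = insert a v → u = v := by
      intro u hu v hv huv
      have hau : a ∉ u := fun h => ha ((Finset.mem_powersetCard.mp hu).1 h)
      have hav : a ∉ v := fun h => ha ((Finset.mem_powersetCard.mp hv).1 h)
      rw [← Finset.erase_insert hau, ← Finset.erase_insert hav, huv]
    have himg : ∑ t ∈ (s.powersetCard 1).image (insert a), ∏ i ∈ t, f i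
        = f a * ∑ i ∈ s, f i := by
      rw [Finset.sum_image hinj]
      have : ∀ u ∈ s.powersetCard 1, ∏ i ∈ insert a u, f i = f a * ∏ i ∈ u, f i := by
        intro u hu
        exact Finset.prod_insert fun h => ha ((Finset.mem_powersetCard.mp hu).1 h)
      rw [Finset.sum_congr rfl this, ← Finset.mul_sum]
      congr 1
      rw [Finset.powersetCard_one, Finset.sum_map]
      simp
    rw [hps, Finset.sum_union hdisj, himg]
    ring_nf
    ring_nf at ih
    linarith [ih]

lemma reduce_multiset : ∀ (d m : ℕ) (M : Multiset ℝ), Multiset.card M = m + d →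
    ∃ N : Multiset ℝ, Multiset.card N = m ∧ ∀ j, j ≤ m →
      (((m + d).descFactorial d : ℕ) : ℝ) * N.esymm j
        = (((m + d - j).descFactorial d : ℕ) : ℝ) * M.esymm j
  | 0, m, M, hM => ⟨M, hM, by intro j hj; simp⟩
  | (d+1), m, M, hM => by
    obtain ⟨N', hN'card, hN'⟩ := step_multiset (m + d) M (by omega)
    obtain ⟨N, hNcard, hN⟩ := reduce_multiset d m N' hN'card
    refine ⟨N, hNcard, fun j hj => ?_⟩
    have e1 := hN' j (by omega)
    have e2 := hN j hj
    have c1 : (m + (d+1)).descFactorial (d+1) = (m + d + 1) * (m + d).descFactorial d :=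
      Nat.succ_descFactorial_succ _ _
    have c2 : (m + (d+1) - j).descFactorial (d+1)
        = (m + d + 1 - j) * (m + d - j).descFactorial d := by
      have h9 : m + (d+1) - j = (m + d - j) + 1 := by omega
      rw [h9, Nat.succ_descFactorial_succ]
      congr 2
      omega
    rw [c1, c2, Nat.cast_mul, Nat.cast_mul]
    linear_combination (((m + d + 1 : ℕ) : ℝ)) * e2 + (((m + d - j).descFactorial d : ℕ) : ℝ) * e1

lemma reduce_fn (m d : ℕ) (x : Fin (m + d) → ℝ) :
    ∃ y : Fin m → ℝ, ∀ j, j ≤ m →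
      (((m + d).descFactorial d : ℕ) : ℝ) * esym m j y
        = (((m + d - j).descFactorial d : ℕ) : ℝ) * esym (m + d) j x := by
  obtain ⟨N, hNcard, hN⟩ := reduce_multiset d m (Finset.univ.val.map x) (by simp)
  obtain ⟨y, hy⟩ := exists_fn m N hNcard
  refine ⟨y, fun j hj => ?_⟩
  rw [esym_eq_esymm, esym_eq_esymm, hy]
  exact hN j hj

lemma esym_cast {m n : ℕ} (h : m = n) (j : ℕ) (x : Fin n → ℝ) :
    esym m j (fun i => x (Fin.cast h i)) = esym n j x := by
  subst h; rfl

lemma descFactorial_cast_pos (a b : ℕ) (h : b ≤ a) : (0:ℝ) < ((a.descFactorial b : ℕ) : ℝ) := by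
  have : a.descFactorial b ≠ 0 := by
    intro h0
    exact absurd (Nat.descFactorial_eq_zero_iff_lt.mp h0) (by omega)
  exact_mod_cast Nat.pos_of_ne_zero this

lemma continuous_esym (n j : ℕ) : Continuous (esym n j) := by
  unfold esym
  exact continuous_finset_sum _ fun s _ => continuous_finset_prod _ fun i _ => continuous_apply i

lemma esym_const_one (n j : ℕ) : esym n j (fun _ => (1:ℝ)) = (n.choose j : ℝ) := by
  simp [esym, Finset.card_powersetCard]

/-- Key positivity: the reduction to `k` variables. -/
lemma esym_pos_of_nonneg {n k : ℕ} (hkn : k ≤ n) {x : Fin n → ℝ}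
    (h0 : ∀ j, 1 ≤ j → j ≤ k → 0 ≤ esym n j x) (hk : 0 < esym n k x) :
    ∀ j, 1 ≤ j → j ≤ k → 0 < esym n j x := by
  have hd : k + (n - k) = n := by omega
  obtain ⟨y, hy⟩ := reduce_fn k (n - k) (fun i => x (Fin.cast hd i))
  have hy' : ∀ j, j ≤ k →
      (((k + (n-k)).descFactorial (n-k) : ℕ) : ℝ) * esym k j y
        = (((k + (n-k) - j).descFactorial (n-k) : ℕ) : ℝ) * esym n j x := by
    intro j hj
    rw [← esym_cast hd j x]
    exact hy j hj
  have hA : (0:ℝ) < (((k + (n-k)).descFactorial (n-k) : ℕ) : ℝ) :=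
    descFactorial_cast_pos _ _ (by omega)
  have ha : ∀ j, j ≤ k → (0:ℝ) < (((k + (n-k) - j).descFactorial (n-k) : ℕ) : ℝ) :=
    fun j hj => descFactorial_cast_pos _ _ (by omega)
  have hy0 : ∀ j, 1 ≤ j → j ≤ k → 0 ≤ esym k j y := by
    intro j h1 h2
    have := hy' j h2
    nlinarith [h0 j h1 h2, ha j h2, mul_nonneg (le_of_lt (ha j h2)) (h0 j h1 h2)]
  have hyk : 0 < esym k k y := by
    have := hy' k le_rfl
    nlinarith [ha k le_rfl, hk]
  have hcoords := pos_of_esym_pos hy0 hyk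
  intro j h1 h2
  have hyj : 0 < esym k j y := esym_pos h2 hcoords
  have := hy' j h2
  nlinarith [ha j h2, hA]

lemma gamma_pos {n k : ℕ} (hk1 : 1 ≤ k) (hkn : k ≤ n) {x : Fin n → ℝ}
    (hx : x ∈ Gamma n k) : ∀ j, 1 ≤ j → j ≤ k → 0 < esym n j x := by
  set S := {x : Fin n → ℝ | 0 < esym n k x} with hS
  set U := {x : Fin n → ℝ | ∀ j ∈ Finset.Icc 1 k, 0 < esym n j x} with hUdef
  set W := {x : Fin n → ℝ | ∃ j ∈ Finset.Icc 1 k, esym n j x < 0} with hWdef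
  have hU : IsOpen U := by
    have : U = ⋂ j ∈ Finset.Icc 1 k, {x : Fin n → ℝ | 0 < esym n j x} := by
      ext z; simp [hUdef]
    rw [this]
    exact isOpen_biInter_finset fun j _ =>
      isOpen_lt continuous_const (continuous_esym n j)
  have hW : IsOpen W := by
    have : W = ⋃ j ∈ Finset.Icc 1 k, {x : Fin n → ℝ | esym n j x < 0} := by
      ext z; simp [hWdef]
    rw [this]
    exact isOpen_biUnion fun j _ => isOpen_lt (continuous_esym n j) continuous_const
  have hdisj : Disjoint U W := by
    rw [Set.disjoint_left]
    rintro z hzU ⟨j, hj, hlt⟩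
    exact absurd (hzU j hj) (not_lt.mpr hlt.le)
  have hsub : Gamma n k ⊆ U ∪ W := by
    intro z hz
    by_cases hzW : z ∈ W
    · exact Or.inr hzW
    · left
      have hzS : z ∈ S := connectedComponentIn_subset S _ hz
      have h0 : ∀ j, 1 ≤ j → j ≤ k → 0 ≤ esym n j z := by
        intro j h1 h2
        by_contra hneg
        exact hzW ⟨j, Finset.mem_Icc.mpr ⟨h1, h2⟩, not_le.mp hneg⟩
      intro j hj
      obtain ⟨h1, h2⟩ := Finset.mem_Icc.mp hj
      exact esym_pos_of_nonneg hkn h0 hzS j h1 h2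
  have honeS : (fun _ => (1:ℝ) : Fin n → ℝ) ∈ S := by
    rw [hS]
    show (0:ℝ) < esym n k _
    rw [esym_const_one]
    exact_mod_cast Nat.choose_pos hkn
  have honeU : (fun _ => (1:ℝ) : Fin n → ℝ) ∈ U := by
    intro j hj
    rw [esym_const_one]
    exact_mod_cast Nat.choose_pos (le_trans (Finset.mem_Icc.mp hj).2 hkn)
  have hmem : (fun _ => (1:ℝ) : Fin n → ℝ) ∈ Gamma n k := mem_connectedComponentIn honeS
  have hGU : Gamma n k ⊆ U :=
    IsPreconnected.subset_left_of_subset_union hU hW hdisj hsub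
      ⟨(fun _ => 1), hmem, honeU⟩ isPreconnected_connectedComponentIn
  exact fun j h1 h2 => hGU hx j (Finset.mem_Icc.mpr ⟨h1, h2⟩)

lemma sq_sum_esym (n : ℕ) (x : Fin n → ℝ) :
    (∑ i, x i) ^ 2 = ∑ i, x i ^ 2 + 2 * esym n 2 x :=
  sq_sum_aux Finset.univ x


/-- If `k ≥ 2`, `A` is symmetric with eigenvalues in `Γ_k^+`, `σ_k(A) ≥ c₁ > 0` and
`σ_{k-1}(A) ≤ c₂`, then the eigenvalues of `A` are bounded in absolute value by a
constant `C` depending only on `c₁, c₂` (and `n, k`). -/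
theorem eigenvalue_bound {n k : ℕ} (h2 : 2 ≤ k) (hk : k ≤ n)
    (c₁ c₂ : ℝ) (hc₁ : 0 < c₁) :
    ∃ C : ℝ, ∀ (A : Matrix (Fin n) (Fin n) ℝ) (hA : A.IsHermitian),
      hA.eigenvalues ∈ Gamma n k → c₁ ≤ msigma k A → msigma (k - 1) A ≤ c₂ →
      ∀ i, |hA.eigenvalues i| ≤ C := by
  set d := n - k with hdd
  have hd : k + d = n := by omega
  by_cases hc2 : 0 < c₂
  case neg =>
    -- vacuous: σ_{k-1} > 0 always on Γ, contradiction with ≤ c₂ ≤ 0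
    refine ⟨0, fun A hA hG hs1 hs2 i => absurd ?_ (not_lt.mpr hs2)⟩
    have hpos := gamma_pos (by omega) hk hG (k-1) (by omega) (by omega)
    have : msigma (k-1) A = esym n (k-1) hA.eigenvalues := by
      rw [msigma, dif_pos hA]
    rw [this]
    linarith [not_lt.mp hc2]
  case pos =>
  set A0 : ℝ := (((k + d).descFactorial d : ℕ) : ℝ) with hA0def
  set ak : ℝ := (((k + d - k).descFactorial d : ℕ) : ℝ) with hakdef
  set ak1 : ℝ := (((k + d - (k-1)).descFactorial d : ℕ) : ℝ) with hak1def
  set a1 : ℝ := (((k + d - 1).descFactorial d : ℕ) : ℝ) with ha1def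
  have hA0 : 0 < A0 := descFactorial_cast_pos _ _ (by omega)
  have hak : 0 < ak := descFactorial_cast_pos _ _ (by omega)
  have hak1 : 0 < ak1 := descFactorial_cast_pos _ _ (by omega)
  have ha1 : 0 < a1 := descFactorial_cast_pos _ _ (by omega)
  set E : ℝ := ak1 * c₂ / A0 with hEdef
  have hE : 0 < E := by positivity
  set δ : ℝ := (ak * c₁ / A0) / E with hδdef
  have hδ : 0 < δ := by positivity
  set M : ℝ := E / δ ^ (k - 2) with hMdef
  have hM : 0 < M := by positivity
  refine ⟨A0 * ((k : ℝ) * M) / a1, fun A hA hG hs1 hs2 i => ?_⟩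
  set lam := hA.eigenvalues with hlam
  have hmk : msigma k A = esym n k lam := by rw [msigma, dif_pos hA]
  have hmk1 : msigma (k-1) A = esym n (k-1) lam := by rw [msigma, dif_pos hA]
  rw [hmk] at hs1
  rw [hmk1] at hs2
  have hpos : ∀ j, 1 ≤ j → j ≤ k → 0 < esym n j lam := gamma_pos (by omega) hk hG
  obtain ⟨y, hy⟩ := reduce_fn k d (fun i => lam (Fin.cast hd i))
  have hy' : ∀ j, j ≤ k → A0 * esym k j y
      = (((k + d - j).descFactorial d : ℕ) : ℝ) * esym n j lam := by
    intro j hj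
    rw [← esym_cast hd j lam]
    exact hy j hj
  have haj : ∀ j, j ≤ k → (0:ℝ) < (((k + d - j).descFactorial d : ℕ) : ℝ) :=
    fun j hj => descFactorial_cast_pos _ _ (by omega)
  -- coordinates of y are positive
  have hyj : ∀ j, 1 ≤ j → j ≤ k → 0 < esym k j y := by
    intro j h1 hj
    have h := hy' j hj
    nlinarith [haj j hj, hpos j h1 hj]
  have hcoords : ∀ i, 0 < y i :=
    pos_of_esym_pos (fun j h1 hj => (hyj j h1 hj).le) (hyj k (by omega) le_rfl)
  -- bounds on esym of y
  have hyk_ge : ak * c₁ ≤ A0 * esym k k y := by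
    rw [hy' k le_rfl]
    exact mul_le_mul_of_nonneg_left hs1 hak.le
  have hyk1_le : esym k (k-1) y ≤ E := by
    have h := hy' (k-1) (by omega)
    rw [hEdef]
    rw [le_div_iff₀ hA0]
    calc esym k (k-1) y * A0 = A0 * esym k (k-1) y := by ring
    _ = ak1 * esym n (k-1) lam := h
    _ ≤ ak1 * c₂ := mul_le_mul_of_nonneg_left hs2 hak1.le
  -- lower bound: δ ≤ y i
  have hlow : ∀ i, δ ≤ y i := by
    intro i
    have hmemP : Finset.univ.erase i ∈
        Finset.powersetCard (k-1) (Finset.univ : Finset (Fin k)) := by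
      refine Finset.mem_powersetCard.mpr ⟨Finset.subset_univ _, ?_⟩
      rw [Finset.card_erase_of_mem (Finset.mem_univ i)]
      simp
    have hprod_le : (∏ j ∈ Finset.univ.erase i, y j) ≤ esym k (k-1) y := by
      rw [esym]
      exact Finset.single_le_sum (f := fun s => ∏ j ∈ s, y j)
        (fun s _ => Finset.prod_nonneg fun j _ => (hcoords j).le) hmemP
    have hkey : y i * (∏ j ∈ Finset.univ.erase i, y j) = esym k k y := by
      rw [esym_top]
      exact Finset.mul_prod_erase Finset.univ y (Finset.mem_univ i)
    have hprodpos : 0 < ∏ j ∈ Finset.univ.erase i, y j :=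
      Finset.prod_pos fun j _ => hcoords j
    have hq : ak * c₁ / A0 ≤ y i * (∏ j ∈ Finset.univ.erase i, y j) := by
      rw [div_le_iff₀ hA0, hkey]
      linarith [hyk_ge]
    have hPE : (∏ j ∈ Finset.univ.erase i, y j) ≤ E := le_trans hprod_le hyk1_le
    rw [hδdef, div_le_iff₀ hE]
    nlinarith [hcoords i]
  -- upper bound: y i ≤ M
  have hup : ∀ i, y i ≤ M := by
    intro i
    set l : Fin k := ⟨if i.val = 0 then 1 else 0, by split <;> omega⟩ with hldef
    have hne : i ≠ l := by
      intro h
      have hv := congrArg Fin.val h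
      rw [hldef] at hv
      simp only at hv
      by_cases h0 : i.val = 0 <;> simp [h0] at hv
    have hmem1 : i ∈ Finset.univ.erase l := Finset.mem_erase.mpr ⟨hne, Finset.mem_univ i⟩
    have hcard1 : (Finset.univ.erase l : Finset (Fin k)).card = k - 1 := by
      rw [Finset.card_erase_of_mem (Finset.mem_univ l)]; simp
    have hmemP : Finset.univ.erase l ∈
        Finset.powersetCard (k-1) (Finset.univ : Finset (Fin k)) :=
      Finset.mem_powersetCard.mpr ⟨Finset.subset_univ _, hcard1⟩
    have hcard2 : ((Finset.univ.erase l).erase i).card = k - 2 := by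
      rw [Finset.card_erase_of_mem hmem1, hcard1]
      omega
    have hP2 : δ ^ (k-2) ≤ ∏ j ∈ (Finset.univ.erase l).erase i, y j := by
      calc δ ^ (k-2) = ∏ _j ∈ (Finset.univ.erase l).erase i, δ := by
            rw [Finset.prod_const, hcard2]
      _ ≤ ∏ j ∈ (Finset.univ.erase l).erase i, y j :=
            Finset.prod_le_prod (fun _ _ => hδ.le) (fun j _ => hlow j)
    have hsplit : y i * ∏ j ∈ (Finset.univ.erase l).erase i, y j
        = ∏ j ∈ Finset.univ.erase l, y j :=
      Finset.mul_prod_erase _ y hmem1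
    have hprod_le : (∏ j ∈ Finset.univ.erase l, y j) ≤ esym k (k-1) y := by
      rw [esym]
      exact Finset.single_le_sum (f := fun s => ∏ j ∈ s, y j)
        (fun s _ => Finset.prod_nonneg fun j _ => (hcoords j).le) hmemP
    have : y i * δ ^ (k-2) ≤ E := by
      calc y i * δ ^ (k-2) ≤ y i * ∏ j ∈ (Finset.univ.erase l).erase i, y j :=
            mul_le_mul_of_nonneg_left hP2 (hcoords i).le
      _ = ∏ j ∈ Finset.univ.erase l, y j := hsplit
      _ ≤ esym k (k-1) y := hprod_le
      _ ≤ E := hyk1_le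
    rw [hMdef, le_div_iff₀ (by positivity)]
    linarith
  -- e_1(lam) ≤ C
  have he1y : esym k 1 y ≤ (k : ℝ) * M := by
    rw [esym_one]
    calc (∑ j, y j) ≤ ∑ _j : Fin k, M := Finset.sum_le_sum fun j _ => hup j
    _ = (k : ℝ) * M := by
      rw [Finset.sum_const]
      simp [nsmul_eq_mul]
  have he1 : esym n 1 lam ≤ A0 * ((k:ℝ) * M) / a1 := by
    rw [le_div_iff₀ ha1]
    have h := hy' 1 (by omega)
    rw [← ha1def] at h
    calc esym n 1 lam * a1 = a1 * esym n 1 lam := by ring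
    _ = A0 * esym k 1 y := h.symm
    _ ≤ A0 * ((k:ℝ) * M) := mul_le_mul_of_nonneg_left he1y hA0.le
  -- conclude
  have he2pos : 0 < esym n 2 lam := hpos 2 (by omega) h2
  have he1pos : 0 < esym n 1 lam := hpos 1 (by omega) (by omega)
  have hsum : (λ i => lam i) = lam := rfl
  have hsq : (lam i) ^ 2 ≤ (∑ j, lam j) ^ 2 := by
    have h := sq_sum_esym n lam
    have hsq_le : (lam i) ^ 2 ≤ ∑ j, (lam j) ^ 2 :=
      Finset.single_le_sum (fun j _ => sq_nonneg (lam j)) (Finset.mem_univ i)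
    linarith
  have habs : |lam i| ≤ ∑ j, lam j := by
    refine abs_le_of_sq_le_sq hsq ?_
    have := he1pos
    rw [esym_one] at this
    linarith
  have : (∑ j, lam j) ≤ A0 * ((k:ℝ) * M) / a1 := by
    rw [← esym_one n lam]
    exact he1
  linarith
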